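/- arXiv:2205.11488 — 2 statements merged into one kernel-verified Lean document; each statement's English description precedes it below -/
import Mathlib

section
/- Let G be a finite graph, let ε₁, ε₂ be entanglements in G (possibly equal), and let s₁ ∈ ε₁ and s₂ ∈ ε₂ be crossing separations with |s₁| ≤ |s₂|. Call a corner of s₁, s₂ green if its order is at most |s₂|. Then at least three of the four corners of s₁, s₂ are green. -/
open Set

variable {V : Type*}

/-- A separation, represented as an ordered pair of sides (standing for the
unordered pair `{A, B}`). -/
abbrev GSep (V : Type*) := Set V × Set V

/-- The order of a separation: the size of its separator `A ∩ B`. -/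
noncomputable def sOrd (s : GSep V) : ℕ := (s.1 ∩ s.2).ncard

/-- `(A, B)` is a separation of `G`: the sides cover `V (G)` and there is no
edge between `A \ B` and `B \ A`. -/
def IsSep (G : SimpleGraph V) (s : GSep V) : Prop :=
  s.1 ∪ s.2 = Set.univ ∧ ∀ a ∈ s.1 \ s.2, ∀ b ∈ s.2 \ s.1, ¬ G.Adj a b

/-- A separation is proper if both `A \ B` and `B \ A` are nonempty. -/
def IsProper (s : GSep V) : Prop := (s.1 \ s.2).Nonempty ∧ (s.2 \ s.1).Nonempty

/-- Two separations are nested if, after possibly renaming their sides,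
`A ⊆ C` and `B ⊇ D`. -/
def Nested (s t : GSep V) : Prop :=
  (s.1 ⊆ t.1 ∧ t.2 ⊆ s.2) ∨ (s.1 ⊆ t.2 ∧ t.1 ⊆ s.2) ∨
  (s.2 ⊆ t.1 ∧ t.2 ⊆ s.1) ∨ (s.2 ⊆ t.2 ∧ t.1 ⊆ s.1)

/-- Two separations cross if they are not nested. -/
def Crosses (s t : GSep V) : Prop := ¬ Nested s t

/-- The corner `(A ∩ C, B ∪ D)` of two (crossing) separations `(A,B)`, `(C,D)`.
The four corners of `s, t` are `corner s t`, `corner s t.swap`,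
`corner s.swap t` and `corner s.swap t.swap`; two corners are opposite if both
side choices are opposite, and two distinct corners lie on the same side of `s`
if they use the same side of `s`. -/
def corner (s t : GSep V) : GSep V := (s.1 ∩ t.1, s.2 ∪ t.2)

/-- An entanglement in `G`: a nonempty set of proper separations of `G`
(closed under swapping sides, i.e. a set of unordered separations) such that
whenever `s ∈ ε` is crossed by a separation `t` of `G` so that the two corners
lying on the same side of `s` have order at most `sOrd s`, at least one of
these corners has order exactly `sOrd s` and lies in `ε`. -/
def IsEntanglement (G : SimpleGraph V) (ε : Set (GSep V)) : Prop :=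
  ε.Nonempty ∧
  (∀ s ∈ ε, IsSep G s ∧ IsProper s) ∧
  (∀ s ∈ ε, Prod.swap s ∈ ε) ∧
  ∀ s ∈ ε, ∀ t : GSep V, IsSep G t → Crosses s t →
    sOrd (corner s t) ≤ sOrd s → sOrd (corner s (Prod.swap t)) ≤ sOrd s →
    (sOrd (corner s t) = sOrd s ∧ corner s t ∈ ε) ∨
    (sOrd (corner s (Prod.swap t)) = sOrd s ∧ corner s (Prod.swap t) ∈ ε)

/-- The separations of `G` lying in some entanglement. -/
def EntSeps (G : SimpleGraph V) : Set (GSep V) :=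
  {t | ∃ ε, IsEntanglement G ε ∧ t ∈ ε}

/-- The crossing number of `s`: the number of separations lying in
entanglements in `G` which are crossed by `s`. -/
noncomputable def xnum (G : SimpleGraph V) (s : GSep V) : ℕ :=
  {t ∈ EntSeps G | Crosses s t}.ncard

/-- A separation in an entanglement `ε` is friendly if no other separation in
`ε` crosses fewer separations in entanglements in `G`. -/
def Friendly (G : SimpleGraph V) (s : GSep V) : Prop :=
  ∃ ε, IsEntanglement G ε ∧ s ∈ ε ∧ ∀ t ∈ ε, xnum G s ≤ xnum G t


lemma sOrd_swap' (s : GSep V) : sOrd (Prod.swap s) = sOrd s := by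
  simp [sOrd, Set.inter_comm]

lemma sOrd_corner_comm (s t : GSep V) :
    sOrd (corner s t) = sOrd (corner t s) := by
  unfold sOrd corner
  congr 1
  ext x
  simp only [Set.mem_inter_iff, Set.mem_union]
  tauto

lemma nested_swap_left {s t : GSep V} (h : Nested s t) : Nested (Prod.swap s) t := by
  unfold Nested at *
  simp only [Prod.fst_swap, Prod.snd_swap]
  tauto

lemma nested_symm {s t : GSep V} (h : Nested s t) : Nested t s := by
  unfold Nested at *
  tauto

lemma crosses_swap_left {s t : GSep V} (h : Crosses s t) : Crosses (Prod.swap s) t := by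
  intro hn
  exact h (by simpa using nested_swap_left hn)

lemma crosses_symm {s t : GSep V} (h : Crosses s t) : Crosses t s :=
  fun hn => h (nested_symm hn)

lemma corner_submod {V : Type*} [Fintype V] (s t : GSep V) :
    sOrd (corner s t) + sOrd (corner (Prod.swap s) (Prod.swap t)) ≤ sOrd s + sOrd t := by
  unfold sOrd corner
  simp only [Prod.fst_swap, Prod.snd_swap]
  set X := (s.1 ∩ t.1) ∩ (s.2 ∪ t.2) with hX
  set Y := (s.2 ∩ t.2) ∩ (s.1 ∪ t.1) with hY
  set S := s.1 ∩ s.2 with hS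
  set T := t.1 ∩ t.2 with hT
  have hXY : X.ncard + Y.ncard = (X ∪ Y).ncard + (X ∩ Y).ncard := by
    rw [Set.ncard_union_add_ncard_inter X Y]
  have hST : (S ∪ T).ncard + (S ∩ T).ncard = S.ncard + T.ncard := by
    rw [Set.ncard_union_add_ncard_inter S T]
  have h1 : X ∪ Y ⊆ S ∪ T := by
    intro x hx
    simp only [hX, hY, hS, hT, Set.mem_union, Set.mem_inter_iff] at *
    tauto
  have h2 : X ∩ Y ⊆ S ∩ T := by
    intro x hx
    simp only [hX, hY, hS, hT, Set.mem_union, Set.mem_inter_iff] at *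
    tauto
  calc X.ncard + Y.ncard = (X ∪ Y).ncard + (X ∩ Y).ncard := hXY
    _ ≤ (S ∪ T).ncard + (S ∩ T).ncard :=
        Nat.add_le_add (Set.ncard_le_ncard h1 (Set.toFinite _))
          (Set.ncard_le_ncard h2 (Set.toFinite _))
    _ = S.ncard + T.ncard := hST

set_option maxHeartbeats 1000000 in
/-- If `s₁ ∈ ε₁` and `s₂ ∈ ε₂` are crossing separations lying in entanglements
of a finite graph with `|s₁| ≤ |s₂|`, and a corner is called green if its order
is at most `|s₂|`, then at least three of the four corners of `s₁, s₂` are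
green. -/
theorem stmt_9 {V : Type*} [Fintype V] (G : SimpleGraph V)
    (ε₁ ε₂ : Set (GSep V)) (h₁ : IsEntanglement G ε₁) (h₂ : IsEntanglement G ε₂)
    (s₁ s₂ : GSep V) (hs₁ : s₁ ∈ ε₁) (hs₂ : s₂ ∈ ε₂)
    (hcross : Crosses s₁ s₂) (hord : sOrd s₁ ≤ sOrd s₂) :
    (sOrd (corner s₁ s₂) ≤ sOrd s₂ ∧ sOrd (corner s₁ (Prod.swap s₂)) ≤ sOrd s₂ ∧
       sOrd (corner (Prod.swap s₁) s₂) ≤ sOrd s₂) ∨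
    (sOrd (corner s₁ s₂) ≤ sOrd s₂ ∧ sOrd (corner s₁ (Prod.swap s₂)) ≤ sOrd s₂ ∧
       sOrd (corner (Prod.swap s₁) (Prod.swap s₂)) ≤ sOrd s₂) ∨
    (sOrd (corner s₁ s₂) ≤ sOrd s₂ ∧ sOrd (corner (Prod.swap s₁) s₂) ≤ sOrd s₂ ∧
       sOrd (corner (Prod.swap s₁) (Prod.swap s₂)) ≤ sOrd s₂) ∨
    (sOrd (corner s₁ (Prod.swap s₂)) ≤ sOrd s₂ ∧
       sOrd (corner (Prod.swap s₁) s₂) ≤ sOrd s₂ ∧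
       sOrd (corner (Prod.swap s₁) (Prod.swap s₂)) ≤ sOrd s₂) := by
  obtain ⟨-, hS₁, hSw₁, hCl₁⟩ := h₁
  obtain ⟨-, hS₂, hSw₂, hCl₂⟩ := h₂
  have hsep₁ : IsSep G s₁ := (hS₁ s₁ hs₁).1
  have hsep₂ : IsSep G s₂ := (hS₂ s₂ hs₂).1
  set o1 := sOrd (corner s₁ s₂) with ho1
  set o2 := sOrd (corner s₁ (Prod.swap s₂)) with ho2
  set o3 := sOrd (corner (Prod.swap s₁) s₂) with ho3
  set o4 := sOrd (corner (Prod.swap s₁) (Prod.swap s₂)) with ho4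
  have sub14 : o1 + o4 ≤ sOrd s₁ + sOrd s₂ := corner_submod s₁ s₂
  have sub23 : o2 + o3 ≤ sOrd s₁ + sOrd s₂ := by
    have h := corner_submod s₁ (Prod.swap s₂)
    rw [Prod.swap_swap, sOrd_swap'] at h
    exact h
  have p14 : o1 ≤ sOrd s₂ ∨ o4 ≤ sOrd s₂ := by omega
  have p23 : o2 ≤ sOrd s₂ ∨ o3 ≤ sOrd s₂ := by omega
  have p12 : o1 ≤ sOrd s₂ ∨ o2 ≤ sOrd s₂ := by
    by_contra hc
    push_neg at hc
    have h3lt : o3 < sOrd s₁ := by omega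
    have h4lt : o4 < sOrd s₁ := by omega
    have hc' := hCl₁ (Prod.swap s₁) (hSw₁ s₁ hs₁) s₂ hsep₂ (crosses_swap_left hcross)
      (by rw [sOrd_swap']; omega) (by rw [sOrd_swap']; omega)
    rw [sOrd_swap'] at hc'
    rcases hc' with ⟨h, -⟩ | ⟨h, -⟩ <;> omega
  have p34 : o3 ≤ sOrd s₂ ∨ o4 ≤ sOrd s₂ := by
    by_contra hc
    push_neg at hc
    have h1lt : o1 < sOrd s₁ := by omega
    have h2lt : o2 < sOrd s₁ := by omega
    have hc' := hCl₁ s₁ hs₁ s₂ hsep₂ hcross (by omega) (by omega)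
    rcases hc' with ⟨h, -⟩ | ⟨h, -⟩ <;> omega
  have p13 : o1 ≤ sOrd s₂ ∨ o3 ≤ sOrd s₂ := by
    by_contra hc
    push_neg at hc
    have h2lt : o2 < sOrd s₁ := by omega
    have h4lt : o4 < sOrd s₁ := by omega
    have hc' := hCl₂ (Prod.swap s₂) (hSw₂ s₂ hs₂) s₁ hsep₁
      (crosses_swap_left (crosses_symm hcross))
      (by rw [sOrd_corner_comm, sOrd_swap']; omega)
      (by rw [sOrd_corner_comm, sOrd_swap']; omega)
    rw [sOrd_corner_comm (Prod.swap s₂) s₁, sOrd_corner_comm (Prod.swap s₂) (Prod.swap s₁),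
      sOrd_swap'] at hc'
    rcases hc' with ⟨h, -⟩ | ⟨h, -⟩ <;> omega
  have p24 : o2 ≤ sOrd s₂ ∨ o4 ≤ sOrd s₂ := by
    by_contra hc
    push_neg at hc
    have h1lt : o1 < sOrd s₁ := by omega
    have h3lt : o3 < sOrd s₁ := by omega
    have hc' := hCl₂ s₂ hs₂ s₁ hsep₁ (crosses_symm hcross)
      (by rw [sOrd_corner_comm]; omega)
      (by rw [sOrd_corner_comm]; omega)
    rw [sOrd_corner_comm s₂ s₁, sOrd_corner_comm s₂ (Prod.swap s₁)] at hc'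
    rcases hc' with ⟨h, -⟩ | ⟨h, -⟩ <;> omega
  tauto
end

section
/- Let G be a graph, let τ, τ' be tangles in G, and let {A,B} be a separation of order < min(ord τ, ord τ') oriented by τ towards A and by τ' towards B. If {C,D} crosses {A,B} and the corners c₁ = {A∩C, B∪D} and c₂ = {A∩D, B∪C} both have order at most |A∩B|, then τ' orients both c₁ and c₂ towards B, and τ orients at least one of c₁, c₂ away from B; in particular at least one of c₁, c₂ distinguishes τ from τ'. -/
open Set

variable {V : Type*}

/-- A tangle of order `k` in `G`: an orientation of all separations of order
less than `k` — an element `(A, B) ∈ τ` is read as the orientation of `{A,B}`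
with small side `A` (pointing towards `B`) — such that no separation is
oriented both ways, and no three small sides of oriented separations together
cover `G` (all vertices and all edges). -/
def IsTangle (G : SimpleGraph V) (k : ℕ) (τ : Set (GSep V)) : Prop :=
  (∀ s ∈ τ, IsSep G s ∧ sOrd s < k) ∧
  (∀ s : GSep V, IsSep G s → sOrd s < k → s ∈ τ ∨ Prod.swap s ∈ τ) ∧
  (∀ s ∈ τ, Prod.swap s ∉ τ) ∧
  (∀ s₁ ∈ τ, ∀ s₂ ∈ τ, ∀ s₃ ∈ τ,
    ¬ (s₁.1 ∪ s₂.1 ∪ s₃.1 = Set.univ ∧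
       ∀ v w, G.Adj v w →
         (v ∈ s₁.1 ∧ w ∈ s₁.1) ∨ (v ∈ s₂.1 ∧ w ∈ s₂.1) ∨ (v ∈ s₃.1 ∧ w ∈ s₃.1)))

/-- A separation distinguishes two tangles if they orient it towards opposite
sides. -/
def Distinguishes (s : GSep V) (τ τ' : Set (GSep V)) : Prop :=
  (s ∈ τ ∧ Prod.swap s ∈ τ') ∨ (Prod.swap s ∈ τ ∧ s ∈ τ')

/-- A separation distinguishes two tangles efficiently if it does so and has
minimum order among all separations distinguishing them. -/
def EffDistinguishes (s : GSep V) (τ τ' : Set (GSep V)) : Prop :=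
  Distinguishes s τ τ' ∧ ∀ t : GSep V, Distinguishes t τ τ' → sOrd s ≤ sOrd t


lemma sep_edge {G : SimpleGraph V} {s : GSep V} (hs : IsSep G s) {v w : V}
    (hvw : G.Adj v w) : (v ∈ s.1 ∧ w ∈ s.1) ∨ (v ∈ s.2 ∧ w ∈ s.2) := by
  have hv : v ∈ s.1 ∨ v ∈ s.2 := by
    have := Set.eq_univ_iff_forall.mp hs.1 v; simpa using this
  have hw : w ∈ s.1 ∨ w ∈ s.2 := by
    have := Set.eq_univ_iff_forall.mp hs.1 w; simpa using this
  by_cases hv1 : v ∈ s.1 <;> by_cases hw1 : w ∈ s.1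
  · exact Or.inl ⟨hv1, hw1⟩
  · have hw2 : w ∈ s.2 := hw.resolve_left hw1
    by_cases hv2 : v ∈ s.2
    · exact Or.inr ⟨hv2, hw2⟩
    · exact absurd hvw (hs.2 v ⟨hv1, hv2⟩ w ⟨hw2, hw1⟩)
  · have hv2 : v ∈ s.2 := hv.resolve_left hv1
    by_cases hw2 : w ∈ s.2
    · exact Or.inr ⟨hv2, hw2⟩
    · exact absurd hvw.symm (hs.2 w ⟨hw1, hw2⟩ v ⟨hv2, hv1⟩)
  · exact Or.inr ⟨hv.resolve_left hv1, hw.resolve_left hw1⟩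

lemma isSep_swap {G : SimpleGraph V} {s : GSep V} (hs : IsSep G s) :
    IsSep G (Prod.swap s) := by
  refine ⟨by rw [Prod.fst_swap, Prod.snd_swap, Set.union_comm]; exact hs.1, ?_⟩
  intro a ha b hb hab
  exact hs.2 b hb a ha hab.symm

lemma corner_isSep {G : SimpleGraph V} {s t : GSep V} (hs : IsSep G s)
    (ht : IsSep G t) : IsSep G (corner s t) := by
  constructor
  · apply Set.eq_univ_iff_forall.mpr
    intro v
    have hv : v ∈ s.1 ∨ v ∈ s.2 := by
      have := Set.eq_univ_iff_forall.mp hs.1 v; simpa using this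
    have hv' : v ∈ t.1 ∨ v ∈ t.2 := by
      have := Set.eq_univ_iff_forall.mp ht.1 v; simpa using this
    simp only [corner, Set.mem_union, Set.mem_inter_iff]
    tauto
  · intro a ha b hb hab
    simp only [corner, Set.mem_diff, Set.mem_union, Set.mem_inter_iff] at ha hb
    rcases sep_edge hs hab with h | h
    · rcases sep_edge ht hab with h' | h' <;> tauto
    · tauto

/-- If `τ`, `τ'` are tangles, `{A,B}` is a separation of order below both
tangle orders, oriented by `τ` towards `A` and by `τ'` towards `B`, and
`{C,D}` crosses `{A,B}` so that both corners `c₁ = {A ∩ C, B ∪ D}` and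
`c₂ = {A ∩ D, B ∪ C}` have order at most `|A ∩ B|`, then `τ'` orients both
`c₁` and `c₂` towards `B`, `τ` orients at least one of them away from `B`, and
in particular at least one of `c₁, c₂` distinguishes `τ` from `τ'`. -/
theorem stmt_19 {V : Type*} [Fintype V] (G : SimpleGraph V) (k k' : ℕ)
    (τ τ' : Set (GSep V)) (hτ : IsTangle G k τ) (hτ' : IsTangle G k' τ')
    (s t : GSep V) (hs : IsSep G s) (ht : IsSep G t)
    (hord : sOrd s < min k k')
    (hsτ : Prod.swap s ∈ τ)   -- τ orients s = (A,B) towards A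
    (hsτ' : s ∈ τ')           -- τ' orients s towards B
    (hcross : Crosses s t)
    (h1 : sOrd (corner s t) ≤ sOrd s)
    (h2 : sOrd (corner s (Prod.swap t)) ≤ sOrd s) :
    corner s t ∈ τ' ∧ corner s (Prod.swap t) ∈ τ' ∧
    (Prod.swap (corner s t) ∈ τ ∨ Prod.swap (corner s (Prod.swap t)) ∈ τ) ∧
    (Distinguishes (corner s t) τ τ' ∨
      Distinguishes (corner s (Prod.swap t)) τ τ') := by
  have hsk : sOrd s < k := lt_of_lt_of_le hord (min_le_left _ _)
  have hsk' : sOrd s < k' := lt_of_lt_of_le hord (min_le_right _ _)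
  have hc1sep : IsSep G (corner s t) := corner_isSep hs ht
  have hc2sep : IsSep G (corner s (Prod.swap t)) := corner_isSep hs (isSep_swap ht)
  -- τ' orients each corner towards B
  have key : ∀ u : GSep V, u.2 = s.2 ∪ t.2 ∨ u.2 = s.2 ∪ t.1 →
      Prod.swap u ∉ τ' := by
    intro u hu hmem
    apply hτ'.2.2.2 s hsτ' s hsτ' (Prod.swap u) hmem
    constructor
    · apply Set.eq_univ_iff_forall.mpr
      intro v
      have hv : v ∈ s.1 ∨ v ∈ s.2 := by
        have := Set.eq_univ_iff_forall.mp hs.1 v; simpa using this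
      rcases hu with hu | hu <;>
        simp only [Prod.fst_swap, hu, Set.mem_union] <;> tauto
    · intro v w hvw
      rcases sep_edge hs hvw with h | h
      · tauto
      · rcases hu with hu | hu <;>
          simp only [Prod.fst_swap, hu, Set.mem_union] <;> tauto
  have hc1τ' : corner s t ∈ τ' := by
    rcases hτ'.2.1 (corner s t) hc1sep (lt_of_le_of_lt h1 hsk') with h | h
    · exact h
    · exact absurd h (key _ (Or.inl rfl))
  have hc2τ' : corner s (Prod.swap t) ∈ τ' := by
    rcases hτ'.2.1 (corner s (Prod.swap t)) hc2sep (lt_of_le_of_lt h2 hsk') with h | h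
    · exact h
    · exact absurd h (key _ (Or.inr rfl))
  -- τ orients at least one corner away from B
  have hnotboth : ¬ (corner s t ∈ τ ∧ corner s (Prod.swap t) ∈ τ) := by
    rintro ⟨h1τ, h2τ⟩
    apply hτ.2.2.2 (Prod.swap s) hsτ (corner s t) h1τ (corner s (Prod.swap t)) h2τ
    constructor
    · apply Set.eq_univ_iff_forall.mpr
      intro v
      have hv : v ∈ s.1 ∨ v ∈ s.2 := by
        have := Set.eq_univ_iff_forall.mp hs.1 v; simpa using this
      have hv' : v ∈ t.1 ∨ v ∈ t.2 := by
        have := Set.eq_univ_iff_forall.mp ht.1 v; simpa using this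
      simp only [corner, Prod.fst_swap, Prod.snd_swap, Set.mem_union,
        Set.mem_inter_iff]
      tauto
    · intro v w hvw
      have h := sep_edge hs hvw
      have h' := sep_edge ht hvw
      simp only [corner, Prod.fst_swap, Prod.snd_swap, Set.mem_inter_iff]
      tauto
  have htau : Prod.swap (corner s t) ∈ τ ∨ Prod.swap (corner s (Prod.swap t)) ∈ τ := by
    rcases hτ.2.1 (corner s t) hc1sep (lt_of_le_of_lt h1 hsk) with h | h
    · rcases hτ.2.1 (corner s (Prod.swap t)) hc2sep (lt_of_le_of_lt h2 hsk) with h' | h'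
      · exact absurd ⟨h, h'⟩ hnotboth
      · exact Or.inr h'
    · exact Or.inl h
  refine ⟨hc1τ', hc2τ', htau, ?_⟩
  rcases htau with h | h
  · exact Or.inl (Or.inr ⟨h, hc1τ'⟩)
  · exact Or.inr (Or.inr ⟨h, hc2τ'⟩)
end
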